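/- arXiv:1910.08388 — 6 statements merged into one kernel-verified Lean document; each statement's English description precedes it below -/
import Mathlib

section
/- Let G be a finite simple graph that is bipartite, and suppose the complement of G is a circle graph, i.e., there is a family of chords of the unit circle in ℝ², indexed by the vertices of G, with pairwise distinct endpoints, such that two distinct vertices are adjacent in the complement of G if and only if the corresponding chords intersect. Then G itself is a circle graph, i.e., there exists a family of chords of the unit circle in ℝ², indexed by the vertices of G, with pairwise distinct endpoints, such that two distinct vertices are adjacent in G if and only if the corresponding chords intersect. -/
/-!
Cut the circle open at a point. A chord model of a graph on `n` vertices becomes `2n` distinct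
positions on a line, and two chords cross exactly when their endpoints interleave: for chords of
the unit circle this is the sign test `orient p q r * orient p q w < 0`, evaluated at the points
`(cos θ, sin θ)` by `orient = 4 sin ((φ - θ) / 2) sin ((ψ - θ) / 2) sin ((ψ - φ) / 2)`.

Number the endpoints of a chord model of `Gᶜ` by `0, …, 2n - 1` and fix a 2-colouring of `G`;
chords of the same colour pairwise cross. Sliding a window of `n` consecutive positions from
`[0, n)` to `[n, 2n)` changes the number of colour-0 endpoints inside by at most one per step,
and the two extreme counts add up to twice the size of the colour class, so some window holds
exactly half of them. A chord with both endpoints in the window crosses no chord with both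
endpoints outside it, so every chord of colour 0 has exactly one endpoint in the window, and
counting gives the same for colour 1. Reversing the order of the positions outside the window then turns every crossing pair into a
non-crossing one and vice versa, which is a chord model of `G`.
-/

open Function Sum

/-- A finite simple graph `G` is a *circle graph* if there is a family of chords of the unit
circle in `ℝ²`, indexed by the vertices of `G` (each chord being the closed segment between
two points `a v` and `b v` of the unit circle), with all `2|V|` endpoints pairwise distinct,
such that two distinct vertices are adjacent in `G` if and only if the corresponding chords
(closed segments) intersect. -/
def IsCircleGraph {V : Type*} (G : SimpleGraph V) : Prop :=
  ∃ a b : V → EuclideanSpace ℝ (Fin 2),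
    (∀ v, ‖a v‖ = 1) ∧ (∀ v, ‖b v‖ = 1) ∧
    Function.Injective (Sum.elim a b) ∧
    ∀ u v : V, u ≠ v →
      (G.Adj u v ↔ (segment ℝ (a u) (b u) ∩ segment ℝ (a v) (b v)).Nonempty)

section Interleaving

open Set

variable {α : Type*} [LinearOrder α]

def Interleaved (a b c d : α) : Prop := Xor (c ∈ uIoo a b) (d ∈ uIoo a b)

/-- `pos` places the two endpoints `pos (inl v)`, `pos (inr v)` of the chord of each vertex `v`
on a line, i.e. on the circle cut open at a point not used by any chord. -/
structure IsChordDiagram {V : Type*} (G : SimpleGraph V) (pos : V ⊕ V → α) : Prop where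
  injective : Injective pos
  adj_iff : ∀ u v, u ≠ v →
    (G.Adj u v ↔ Interleaved (pos (inl u)) (pos (inr u)) (pos (inl v)) (pos (inr v)))

namespace IsChordDiagram

variable {β V : Type*} [LinearOrder β] {G : SimpleGraph V} {pos : V ⊕ V → α}

theorem of_lt_iff_lt (h : IsChordDiagram G pos) {pos' : V ⊕ V → β}
    (hlt : ∀ w w', pos' w < pos' w' ↔ pos w < pos w') : IsChordDiagram G pos' where
  injective w w' hw := h.injective <| by
    by_contra hne
    rcases lt_or_gt_of_ne hne with hlt' | hlt'
    · exact (hlt w w').2 hlt' |>.ne hw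
    · exact (hlt w' w).2 hlt' |>.ne hw.symm
  adj_iff u v huv := by
    simp only [h.adj_iff u v huv, Interleaved, uIoo, mem_Ioo, inf_lt_iff, lt_sup_iff, hlt]

theorem comp_strictMono (h : IsChordDiagram G pos) {f : α → β} (hf : StrictMono f) :
    IsChordDiagram G (f ∘ pos) :=
  h.of_lt_iff_lt fun _ _ => hf.lt_iff_lt

end IsChordDiagram

theorem Set.OrdConnected.not_interleaved {s : Set α} (hs : s.OrdConnected) {a b c d : α}
    (ha : a ∈ s) (hb : b ∈ s) (hc : c ∉ s) (hd : d ∉ s) : ¬Interleaved a b c d := by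
  rintro (⟨h, -⟩ | ⟨h, -⟩)
  · exact hc (hs.uIcc_subset ha hb (uIoo_subset_uIcc_self h))
  · exact hd (hs.uIcc_subset ha hb (uIoo_subset_uIcc_self h))

theorem mem_uIoo_iff_mul_neg {R : Type*} [CommRing R] [LinearOrder R] [IsStrictOrderedRing R]
    {a b c : R} : c ∈ uIoo a b ↔ (c - a) * (c - b) < 0 := by
  rw [mul_neg_iff, uIoo_eq_union, mem_union, mem_Ioo, mem_Ioo, sub_pos, sub_neg, sub_pos, sub_neg]
  tauto

theorem xor_neg_iff_mul_neg {R : Type*} [CommRing R] [LinearOrder R] [IsStrictOrderedRing R]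
    {x y : R} (hx : x ≠ 0) (hy : y ≠ 0) : Xor (x < 0) (y < 0) ↔ x * y < 0 := by
  rw [xor_def, mul_neg_iff]
  rcases hx.lt_or_gt with hx | hx <;> rcases hy.lt_or_gt with hy | hy <;>
    simp [hx, hy, not_lt_of_gt]

theorem interleaved_iff_mul_neg {R : Type*} [CommRing R] [LinearOrder R] [IsStrictOrderedRing R]
    {a b c d : R} (hca : c ≠ a) (hcb : c ≠ b) (hda : d ≠ a) (hdb : d ≠ b) :
    Interleaved a b c d ↔ (c - a) * (c - b) * ((d - a) * (d - b)) < 0 := by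
  rw [Interleaved, mem_uIoo_iff_mul_neg, mem_uIoo_iff_mul_neg]
  exact xor_neg_iff_mul_neg (mul_ne_zero (sub_ne_zero.2 hca) (sub_ne_zero.2 hcb))
    (mul_ne_zero (sub_ne_zero.2 hda) (sub_ne_zero.2 hdb))

end Interleaving

section Geometry

open Real Set

local notation "ℝ²" => EuclideanSpace ℝ (Fin 2)

theorem norm_add_smul_sub_sq {E : Type*} [NormedAddCommGroup E] [InnerProductSpace ℝ E]
    {p q : E} (hp : ‖p‖ = 1) (hq : ‖q‖ = 1) (s : ℝ) :
    ‖p + s • (q - p)‖ ^ 2 = 1 - s * (1 - s) * ‖q - p‖ ^ 2 := by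
  rw [show p + s • (q - p) = (1 - s) • p + s • q by module, norm_add_sq_real, norm_sub_sq_real,
    norm_smul, norm_smul, inner_smul_left, inner_smul_right, real_inner_comm, hp, hq]
  simp only [Real.norm_eq_abs, mul_pow, sq_abs, conj_trivial]
  ring

theorem EuclideanSpace.norm_sq_eq_fin_two (x : ℝ²) : ‖x‖ ^ 2 = x 0 ^ 2 + x 1 ^ 2 := by
  simp [EuclideanSpace.norm_sq_eq, Fin.sum_univ_two]

noncomputable def orient (p q x : ℝ²) : ℝ :=
  (q 0 - p 0) * (x 1 - p 1) - (q 1 - p 1) * (x 0 - p 0)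

theorem orient_add_smul {p q r w : ℝ²} {s t : ℝ} (hst : s + t = 1) :
    orient p q (s • r + t • w) = s * orient p q r + t * orient p q w := by
  simp only [orient, PiLp.add_apply, PiLp.smul_apply, smul_eq_mul]
  linear_combination ((q 0 - p 0) * p 1 - (q 1 - p 1) * p 0) * hst

theorem orient_eq_zero_of_mem_segment {p q x : ℝ²} (hx : x ∈ segment ℝ p q) : orient p q x = 0 := by
  obtain ⟨s, t, -, -, hst, rfl⟩ := hx
  rw [orient_add_smul hst]
  simp only [orient]
  ring

theorem EuclideanSpace.ext_fin_two {x y : ℝ²} (h0 : x 0 = y 0) (h1 : x 1 = y 1) : x = y := by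
  ext i
  fin_cases i <;> assumption

theorem exists_eq_add_smul_of_orient_eq_zero {p q x : ℝ²} (hpq : p ≠ q) (hx : orient p q x = 0) :
    ∃ s : ℝ, x = p + s • (q - p) := by
  have hD : (q 0 - p 0) ^ 2 + (q 1 - p 1) ^ 2 ≠ 0 := by
    simpa [EuclideanSpace.norm_sq_eq_fin_two] using
      pow_ne_zero 2 (norm_ne_zero_iff.2 (sub_ne_zero.2 hpq.symm))
  refine ⟨((x 0 - p 0) * (q 0 - p 0) + (x 1 - p 1) * (q 1 - p 1)) /
    ((q 0 - p 0) ^ 2 + (q 1 - p 1) ^ 2), ?_⟩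
  simp only [orient] at hx
  apply EuclideanSpace.ext_fin_two <;>
    simp only [PiLp.add_apply, PiLp.smul_apply, PiLp.sub_apply, smul_eq_mul] <;> field_simp
  · linear_combination (-(q 1 - p 1)) * hx
  · linear_combination (q 0 - p 0) * hx

section UnitCircle

variable {p q : ℝ²} (hp : ‖p‖ = 1) (hq : ‖q‖ = 1) (hpq : p ≠ q)
include hp hq hpq

theorem mem_segment_of_orient_eq_zero {x : ℝ²} (hx : ‖x‖ ≤ 1) (h : orient p q x = 0) :
    x ∈ segment ℝ p q := by
  obtain ⟨s, rfl⟩ := exists_eq_add_smul_of_orient_eq_zero hpq h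
  have hd : 0 < ‖q - p‖ ^ 2 := pow_pos (norm_pos_iff.2 (sub_ne_zero.2 hpq.symm)) 2
  have hs : 0 ≤ s * (1 - s) := by
    nlinarith [norm_add_smul_sub_sq hp hq s, pow_le_one₀ (norm_nonneg _) hx (n := 2)]
  exact ⟨1 - s, s, by nlinarith, by nlinarith, by ring, by module⟩

theorem eq_or_eq_of_orient_eq_zero {x : ℝ²} (hx : ‖x‖ = 1) (h : orient p q x = 0) :
    x = p ∨ x = q := by
  obtain ⟨s, rfl⟩ := exists_eq_add_smul_of_orient_eq_zero hpq h
  have hd : ‖q - p‖ ^ 2 ≠ 0 := by simpa [sub_eq_zero] using hpq.symm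
  have hs : s * (1 - s) = 0 := by
    have := norm_add_smul_sub_sq hp hq s
    rw [hx, one_pow, eq_sub_iff_add_eq, add_eq_left] at this
    simpa [hd] using this
  rcases mul_eq_zero.1 hs with hs | hs
  · left; simp [hs]
  · right; rw [show s = 1 by linarith]; module

theorem segment_inter_nonempty_iff_orient_mul_neg {r w : ℝ²} (hr : ‖r‖ = 1) (hw : ‖w‖ = 1)
    (hrp : r ≠ p) (hrq : r ≠ q) (hwp : w ≠ p) (hwq : w ≠ q) :
    (segment ℝ p q ∩ segment ℝ r w).Nonempty ↔ orient p q r * orient p q w < 0 := by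
  have hr0 : orient p q r ≠ 0 := fun h =>
    (eq_or_eq_of_orient_eq_zero hp hq hpq hr h).elim hrp hrq
  have hw0 : orient p q w ≠ 0 := fun h =>
    (eq_or_eq_of_orient_eq_zero hp hq hpq hw h).elim hwp hwq
  constructor
  · rintro ⟨x, hxpq, s, t, hs, ht, hst, rfl⟩
    have h0 := orient_eq_zero_of_mem_segment hxpq
    rw [orient_add_smul hst] at h0
    set A := orient p q r
    set B := orient p q w
    by_contra! hAB
    have hsum : s * (A * A) + t * (B * B) + A * B = 0 := by
      linear_combination (A + B) * h0 - A * B * hst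
    have hs0 : s * (A * A) = 0 := by nlinarith [mul_nonneg ht (mul_self_nonneg B)]
    have ht0 : t * (B * B) = 0 := by nlinarith [mul_nonneg hs (mul_self_nonneg A)]
    simp only [mul_eq_zero, or_self, hr0, hw0, or_false] at hs0 ht0
    linarith
  · intro hneg
    set A := orient p q r
    set B := orient p q w
    have hAB : A - B ≠ 0 := fun h => by
      rw [sub_eq_zero.1 h] at hneg
      exact (mul_self_nonneg B).not_gt hneg
    obtain ⟨t, htAB⟩ : ∃ t, t * (A - B) = A := ⟨A / (A - B), div_mul_cancel₀ A hAB⟩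
    have ht : 0 ≤ t ∧ t ≤ 1 := by
      rcases mul_neg_iff.1 hneg with ⟨hA, hB⟩ | ⟨hA, hB⟩ <;> constructor <;> nlinarith
    have hx : (1 - t) • r + t • w ∈ segment ℝ r w := ⟨1 - t, t, by linarith, ht.1, by ring, rfl⟩
    refine ⟨_, mem_segment_of_orient_eq_zero hp hq hpq ?_ ?_, hx⟩
    · exact mem_closedBall_zero_iff.1 <|
        (convex_closedBall (0 : ℝ²) 1).segment_subset (by simp [hr]) (by simp [hw]) hx
    · rw [orient_add_smul (by ring)]
      linear_combination -htAB

end UnitCircle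

noncomputable def circlePoint (θ : ℝ) : ℝ² := !₂[cos θ, sin θ]

theorem norm_circlePoint (θ : ℝ) : ‖circlePoint θ‖ = 1 := by
  simp [circlePoint, EuclideanSpace.norm_eq, Fin.sum_univ_two]

theorem circlePoint_injOn : InjOn circlePoint (Ioc (-π) π) := by
  intro θ hθ φ hφ h
  have hcos : cos θ = cos φ := congrArg (· 0) h
  have hsin : sin θ = sin φ := congrArg (· 1) h
  rw [← Complex.arg_cos_add_sin_mul_I hθ, ← Complex.arg_cos_add_sin_mul_I hφ, ← Complex.ofReal_cos,
    ← Complex.ofReal_sin, hcos, hsin, Complex.ofReal_cos, Complex.ofReal_sin]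

theorem exists_circlePoint_eq {x : ℝ²} (hx : ‖x‖ = 1) : ∃ θ ∈ Ioc (-π) π, circlePoint θ = x := by
  set z : ℂ := ⟨x 0, x 1⟩
  have hz : ‖z‖ = 1 := by
    have h := EuclideanSpace.norm_sq_eq_fin_two x
    rw [hx] at h
    rw [← pow_eq_one_iff_of_nonneg (norm_nonneg z) two_ne_zero, Complex.sq_norm, Complex.normSq_mk]
    linear_combination -h
  refine ⟨z.arg, Complex.arg_mem_Ioc z, EuclideanSpace.ext_fin_two ?_ ?_⟩
  · simpa [circlePoint, hz, z] using Complex.cos_arg (norm_ne_zero_iff.1 (hz.trans_ne one_ne_zero))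
  · simpa [circlePoint, hz, z] using Complex.sin_arg z

theorem orient_circlePoint (θ φ ψ : ℝ) :
    orient (circlePoint θ) (circlePoint φ) (circlePoint ψ) =
      4 * sin ((φ - θ) / 2) * sin ((ψ - θ) / 2) * sin ((ψ - φ) / 2) := by
  have h : sin ((ψ - φ) / 2) = sin ((ψ + θ) / 2 - (φ + θ) / 2) := by ring_nf
  simp only [orient, circlePoint, Matrix.cons_val_zero, Matrix.cons_val_one]
  rw [cos_sub_cos, cos_sub_cos, sin_sub_sin, sin_sub_sin, h, sin_sub]
  ring

theorem sin_half_sub_mul_sub_pos {x y : ℝ} (hx : x ∈ Ioc (-π) π) (hy : y ∈ Ioc (-π) π)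
    (hxy : x ≠ y) : 0 < sin ((x - y) / 2) * (x - y) := by
  rcases hxy.lt_or_gt with h | h
  · exact mul_pos_of_neg_of_neg
      (sin_neg_of_neg_of_neg_pi_lt (by linarith) (by linarith [hx.1, hy.2])) (by linarith)
  · exact mul_pos (sin_pos_of_pos_of_lt_pi (by linarith) (by linarith [hx.2, hy.1])) (by linarith)

theorem segment_circlePoint_inter_nonempty_iff {θ φ ψ ψ' : ℝ} (hθ : θ ∈ Ioc (-π) π)
    (hφ : φ ∈ Ioc (-π) π) (hψ : ψ ∈ Ioc (-π) π) (hψ' : ψ' ∈ Ioc (-π) π) (hθφ : θ ≠ φ)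
    (hψθ : ψ ≠ θ) (hψφ : ψ ≠ φ) (hψ'θ : ψ' ≠ θ) (hψ'φ : ψ' ≠ φ) :
    (segment ℝ (circlePoint θ) (circlePoint φ) ∩
      segment ℝ (circlePoint ψ) (circlePoint ψ')).Nonempty ↔ Interleaved θ φ ψ ψ' := by
  have hne {x y : ℝ} (hx : x ∈ Ioc (-π) π) (hy : y ∈ Ioc (-π) π) (hxy : x ≠ y) :
      circlePoint x ≠ circlePoint y := circlePoint_injOn.ne hx hy hxy
  rw [segment_inter_nonempty_iff_orient_mul_neg (norm_circlePoint θ) (norm_circlePoint φ)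
      (hne hθ hφ hθφ) (norm_circlePoint ψ) (norm_circlePoint ψ') (hne hψ hθ hψθ) (hne hψ hφ hψφ)
      (hne hψ' hθ hψ'θ) (hne hψ' hφ hψ'φ), orient_circlePoint, orient_circlePoint,
    interleaved_iff_mul_neg hψθ hψφ hψ'θ hψ'φ]
  have hK : 0 < 16 * sin ((φ - θ) / 2) ^ 2 := by
    have := sin_half_sub_mul_sub_pos hφ hθ hθφ.symm
    have : sin ((φ - θ) / 2) ≠ 0 := left_ne_zero_of_mul this.ne'
    positivity
  have hSD : 0 < sin ((ψ - θ) / 2) * sin ((ψ - φ) / 2) *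
      (sin ((ψ' - θ) / 2) * sin ((ψ' - φ) / 2)) * ((ψ - θ) * (ψ - φ) * ((ψ' - θ) * (ψ' - φ))) := by
    refine (mul_pos
      (mul_pos (sin_half_sub_mul_sub_pos hψ hθ hψθ) (sin_half_sub_mul_sub_pos hψ hφ hψφ))
      (mul_pos (sin_half_sub_mul_sub_pos hψ' hθ hψ'θ) (sin_half_sub_mul_sub_pos hψ' hφ hψ'φ))
      ).trans_eq ?_
    ring
  refine Iff.trans ?_ (neg_iff_neg_of_mul_pos hSD)
  rw [show ∀ K s₁ s₂ s₃ s₄ : ℝ,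
    4 * K * s₁ * s₂ * (4 * K * s₃ * s₄) = 16 * K ^ 2 * (s₁ * s₂ * (s₃ * s₄)) by intros; ring]
  exact ⟨fun h => neg_of_mul_neg_right h hK.le, mul_neg_of_pos_of_neg hK⟩

theorem isCircleGraph_iff_exists_isChordDiagram {V : Type*} {G : SimpleGraph V} :
    IsCircleGraph G ↔ ∃ pos : V ⊕ V → ℝ, IsChordDiagram G pos := by
  have crossing {η : V ⊕ V → ℝ} (hη : Injective η) (hmem : ∀ w, η w ∈ Ioc (-π) π) {u v : V}
      (huv : u ≠ v) :
      (segment ℝ (circlePoint (η (inl u))) (circlePoint (η (inr u))) ∩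
        segment ℝ (circlePoint (η (inl v))) (circlePoint (η (inr v)))).Nonempty ↔
      Interleaved (η (inl u)) (η (inr u)) (η (inl v)) (η (inr v)) :=
    segment_circlePoint_inter_nonempty_iff (hmem _) (hmem _) (hmem _) (hmem _)
      (hη.ne inl_ne_inr) (hη.ne (by simpa using huv.symm)) (hη.ne inl_ne_inr)
      (hη.ne inr_ne_inl) (hη.ne (by simpa using huv.symm))
  constructor
  · rintro ⟨a, b, ha, hb, hab, hadj⟩
    choose η hmem hη using fun w => exists_circlePoint_eq (x := Sum.elim a b w) (by
      cases w <;> simp [ha, hb])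
    have hinj : Injective η := fun w w' h => hab (by rw [← hη, ← hη, h])
    refine ⟨η, hinj, fun u v huv => ?_⟩
    rw [hadj u v huv, ← crossing hinj hmem huv, hη, hη, hη, hη, elim_inl, elim_inr, elim_inl,
      elim_inr]
  · rintro ⟨pos, hpos⟩
    have hη := hpos.comp_strictMono (arctan_strictMono.const_mul two_pos)
    have hmem (w : V ⊕ V) : 2 * arctan (pos w) ∈ Ioc (-π) π :=
      ⟨by linarith [neg_pi_div_two_lt_arctan (pos w)], by linarith [arctan_lt_pi_div_two (pos w)]⟩
    refine ⟨fun v => circlePoint (2 * arctan (pos (inl v))),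
      fun v => circlePoint (2 * arctan (pos (inr v))), fun _ => norm_circlePoint _,
      fun _ => norm_circlePoint _, fun w w' h => hη.injective ?_,
      fun u v huv => (hη.adj_iff u v huv).trans (crossing hη.injective hmem huv).symm⟩
    exact circlePoint_injOn (hmem w) (hmem w') (by cases w <;> cases w' <;> exact h)

end Geometry

section Window

open Finset

/-- Keeps the window `[i, i + n)` in place and lists the other positions of `[0, 2n)` below it in
reversed cyclic order. -/
def windowFlip (i n x : ℕ) : ℤ :=
  if x < i then i - n - 1 - x else if x < i + n then x else i + n - 1 - x

theorem interleaved_windowFlip_iff {i n a b c d : ℕ}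
    (ha : a < 2 * n) (hb : b < 2 * n) (hc : c < 2 * n) (hd : d < 2 * n)
    (hab : a ∈ Ico i (i + n) ↔ b ∉ Ico i (i + n)) (hcd : c ∈ Ico i (i + n) ↔ d ∉ Ico i (i + n))
    (hac : a ≠ c) (had : a ≠ d) (hbc : b ≠ c) (hbd : b ≠ d) :
    Interleaved (windowFlip i n a) (windowFlip i n b) (windowFlip i n c) (windowFlip i n d) ↔
      ¬Interleaved a b c d := by
  simp only [Interleaved, windowFlip, Set.uIoo, Set.mem_Ioo, inf_lt_iff, lt_sup_iff, xor_def,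
    mem_Ico] at *
  split_ifs <;> omega

theorem windowFlip_injOn {i n : ℕ} : Set.InjOn (windowFlip i n) (Set.Iio (2 * n)) := by
  intro x hx y hy h
  simp only [windowFlip, Set.mem_Iio] at *
  split_ifs at h <;> omega

theorem exists_eq_of_step_le_one {f : ℕ → ℕ} {k m : ℕ}
    (hstep : ∀ i < k, f (i + 1) ≤ f i + 1 ∧ f i ≤ f (i + 1) + 1)
    (hm : f 0 ≤ m ∧ m ≤ f k ∨ f k ≤ m ∧ m ≤ f 0) : ∃ i ≤ k, f i = m := by
  induction k with
  | zero => exact ⟨0, le_rfl, by omega⟩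
  | succ k ih =>
    by_cases hk : f 0 ≤ m ∧ m ≤ f k ∨ f k ≤ m ∧ m ≤ f 0
    · obtain ⟨i, hi, hfi⟩ := ih (fun i hi => hstep i (by omega)) hk
      exact ⟨i, by omega, hfi⟩
    · have := hstep k (by omega)
      exact ⟨k + 1, le_rfl, by omega⟩

theorem exists_card_Ico_inter_eq_half {n m : ℕ} {S : Finset ℕ} (hS : S ⊆ range (2 * n))
    (hm : #S = 2 * m) : ∃ i ≤ n, #(Ico i (i + n) ∩ S) = m := by
  have hends : #(Ico 0 n ∩ S) + #(Ico n (n + n) ∩ S) = #S := by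
    rw [← card_union_of_disjoint (disjoint_of_subset_left inter_subset_left
        (disjoint_of_subset_right inter_subset_left (Ico_disjoint_Ico_consecutive 0 n (n + n)))),
      ← union_inter_distrib_right, Ico_union_Ico_eq_Ico (Nat.zero_le n) (by omega),
      ← range_eq_Ico, ← two_mul, inter_eq_right.2 hS]
  have hstep (i : ℕ) : #(Ico (i + 1) (i + 1 + n) ∩ S) ≤ #(Ico i (i + n) ∩ S) + 1 ∧
      #(Ico i (i + n) ∩ S) ≤ #(Ico (i + 1) (i + 1 + n) ∩ S) + 1 := by
    constructor
    · exact (card_le_card fun x => by grind).trans (card_insert_le (i + n) _)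
    · exact (card_le_card fun x => by grind).trans (card_insert_le i _)
  refine exists_eq_of_step_le_one (f := fun i => #(Ico i (i + n) ∩ S)) (fun i _ => hstep i) ?_
  simp only [zero_add]
  omega

end Window

section Counting

open Finset

variable {V β : Type*} [DecidableEq β] {r : V ⊕ V → β} {I : Finset β} {v : V}

def endpointsIn (r : V ⊕ V → β) (I : Finset β) (v : V) : ℕ :=
  (if r (inl v) ∈ I then 1 else 0) + (if r (inr v) ∈ I then 1 else 0)

theorem endpointsIn_eq_zero_iff : endpointsIn r I v = 0 ↔ r (inl v) ∉ I ∧ r (inr v) ∉ I := by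
  unfold endpointsIn; split_ifs <;> simp_all

theorem endpointsIn_eq_two_iff : endpointsIn r I v = 2 ↔ r (inl v) ∈ I ∧ r (inr v) ∈ I := by
  unfold endpointsIn; split_ifs <;> simp_all

theorem endpointsIn_eq_one_iff : endpointsIn r I v = 1 ↔ (r (inl v) ∈ I ↔ r (inr v) ∉ I) := by
  unfold endpointsIn; split_ifs <;> simp_all

theorem endpointsIn_le_two : endpointsIn r I v ≤ 2 := by
  unfold endpointsIn; split_ifs <;> simp

theorem sum_endpointsIn (hr : Injective r) (A : Finset V) (I : Finset β) :
    ∑ v ∈ A, endpointsIn r I v = #(I ∩ (A.disjSum A).image r) := by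
  rw [inter_comm, ← filter_mem_eq_inter, filter_image, card_image_of_injective _ hr, card_filter,
    sum_disjSum, ← sum_add_distrib]
  rfl

variable [LinearOrder β]

theorem endpointsIn_eq_one_of_sum_eq_card (hI : (I : Set β).OrdConnected) {A : Finset V}
    (hA : ∀ u ∈ A, ∀ v ∈ A, u ≠ v → Interleaved (r (inl u)) (r (inr u)) (r (inl v)) (r (inr v)))
    (hsum : ∑ v ∈ A, endpointsIn r I v = #A) (hv : v ∈ A) : endpointsIn r I v = 1 := by
  have hmono : (∀ u ∈ A, 1 ≤ endpointsIn r I u) ∨ (∀ u ∈ A, endpointsIn r I u ≤ 1) := by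
    by_contra! ⟨⟨u, hu, hu0⟩, ⟨w, hw, hw2⟩⟩
    have hu0 := endpointsIn_eq_zero_iff.1 (by omega : endpointsIn r I u = 0)
    have hw2 := endpointsIn_eq_two_iff.1
      (by have := endpointsIn_le_two (r := r) (I := I) (v := w); omega : endpointsIn r I w = 2)
    exact hI.not_interleaved hw2.1 hw2.2 hu0.1 hu0.2 (hA w hw u hu (by rintro rfl; omega))
  rw [card_eq_sum_ones] at hsum
  rcases hmono with h | h
  · exact ((sum_eq_sum_iff_of_le h).1 hsum.symm v hv).symm
  · exact (sum_eq_sum_iff_of_le h).1 hsum v hv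

end Counting

section Construction

open Finset

variable {V : Type*} [Fintype V] {G : SimpleGraph V}

theorem IsChordDiagram.exists_nat_lt {α : Type*} [LinearOrder α] {pos : V ⊕ V → α}
    (h : IsChordDiagram G pos) :
    ∃ r : V ⊕ V → ℕ, IsChordDiagram G r ∧ ∀ w, r w < 2 * Fintype.card V := by
  refine ⟨fun w => #{w' | pos w' < pos w},
    h.of_lt_iff_lt fun w w' => ⟨fun hlt => ?_, fun hlt => ?_⟩, fun w => ?_⟩
  · by_contra hle
    refine (card_le_card fun x hx => ?_).not_gt hlt
    simp only [mem_filter, mem_univ, true_and] at hx ⊢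
    exact hx.trans_le (not_lt.1 hle)
  · refine card_lt_card ((ssubset_iff_of_subset fun x hx => ?_).2 ⟨w, ?_⟩)
    · simp only [mem_filter, mem_univ, true_and] at hx ⊢; exact hx.trans hlt
    · simpa using hlt
  · calc #{w' | pos w' < pos w} < #(univ : Finset (V ⊕ V)) :=
          card_lt_card (filter_ssubset.2 ⟨w, mem_univ w, lt_irrefl _⟩)
      _ = 2 * Fintype.card V := by rw [card_univ, Fintype.card_sum, two_mul]

theorem IsChordDiagram.exists_Ico_splitting {r : V ⊕ V → ℕ} (h : IsChordDiagram Gᶜ r)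
    (C : G.Coloring (Fin 2)) (hr : ∀ w, r w < 2 * Fintype.card V) :
    ∃ i, ∀ v, r (inl v) ∈ Ico i (i + Fintype.card V) ↔ r (inr v) ∉ Ico i (i + Fintype.card V) := by
  set n := Fintype.card V
  have hsame (u v : V) (hc : C u = C v) (huv : u ≠ v) :
      Interleaved (r (inl u)) (r (inr u)) (r (inl v)) (r (inr v)) :=
    (h.adj_iff u v huv).1 ((SimpleGraph.compl_adj G u v).2 ⟨huv, fun hadj => C.valid hadj hc⟩)
  have himage (A : Finset V) : (A.disjSum A).image r ⊆ range (2 * n) := fun x hx => by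
    obtain ⟨w, -, rfl⟩ := mem_image.1 hx
    exact mem_range.2 (hr w)
  obtain ⟨i, hi, hhalf⟩ := exists_card_Ico_inter_eq_half (himage {v | C v = 0})
    (by rw [card_image_of_injective _ h.injective, card_disjSum, two_mul])
  set I := Ico i (i + n)
  have hI : (I : Set ℕ).OrdConnected := by rw [coe_Ico]; exact Set.ordConnected_Ico
  have htotal : ∑ v, endpointsIn r I v = n := by
    have hfull : (univ.disjSum univ).image r = range (2 * n) :=
      eq_of_subset_of_card_le (himage univ) (by
        rw [card_image_of_injective _ h.injective, card_disjSum, card_univ, card_range, two_mul])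
    rw [sum_endpointsIn h.injective, hfull, inter_eq_left.2 (by grind), Nat.card_Ico]
    omega
  have hclass (c : Fin 2) : ∑ v ∈ {v | C v = c}, endpointsIn r I v = #{v | C v = c} := by
    have h0 : ∑ v ∈ {v | C v = 0}, endpointsIn r I v = #{v | C v = 0} := by
      rw [sum_endpointsIn h.injective, hhalf]
    have hsum := sum_fiberwise univ C (endpointsIn r I)
    have hcard := card_eq_sum_card_fiberwise (f := C) (s := univ) (t := univ) fun _ _ => mem_univ _
    rw [Fin.sum_univ_two] at hsum hcard
    rw [card_univ] at hcard
    rcases (by omega : c = 0 ∨ c = 1) with rfl | rfl <;> omega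
  refine ⟨i, fun v => endpointsIn_eq_one_iff.1 ?_⟩
  exact endpointsIn_eq_one_of_sum_eq_card hI
    (fun u hu w hw => hsame u w (by simp_all)) (hclass (C v)) (by simp)

theorem IsChordDiagram.exists_of_compl {α : Type*} [LinearOrder α] {pos : V ⊕ V → α}
    (h : IsChordDiagram Gᶜ pos) (hG : G.Colorable 2) :
    ∃ pos' : V ⊕ V → ℤ, IsChordDiagram G pos' := by
  obtain ⟨r, hr, hlt⟩ := h.exists_nat_lt
  obtain ⟨C⟩ := hG
  obtain ⟨i, hi⟩ := hr.exists_Ico_splitting C hlt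
  refine ⟨windowFlip i (Fintype.card V) ∘ r,
    fun w w' hw => hr.injective (windowFlip_injOn (hlt w) (hlt w') hw), fun u v huv => ?_⟩
  have hne {x y : V ⊕ V} (hxy : x ≠ y) : r x ≠ r y := hr.injective.ne hxy
  calc G.Adj u v ↔ ¬Gᶜ.Adj u v := by simp [SimpleGraph.compl_adj, huv]
    _ ↔ ¬Interleaved (r (inl u)) (r (inr u)) (r (inl v)) (r (inr v)) :=
      not_congr (hr.adj_iff u v huv)
    _ ↔ _ := (interleaved_windowFlip_iff (hlt _) (hlt _) (hlt _) (hlt _) (hi u) (hi v)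
      (hne (by simpa using huv)) (hne inl_ne_inr) (hne inr_ne_inl) (hne (by simpa using huv))).symm

end Construction

/-- If a bipartite graph `G` (i.e. `χ(G) ≤ 2`) is the complement of a circle graph,
then `G` is a circle graph. -/
theorem bipartite_complement_of_circle_graph {V : Type*} [Fintype V] (G : SimpleGraph V)
    (hbip : G.chromaticNumber ≤ 2) (hcompl : IsCircleGraph Gᶜ) :
    IsCircleGraph G := by
  obtain ⟨pos, hpos⟩ := isCircleGraph_iff_exists_isChordDiagram.1 hcompl
  obtain ⟨pos', hpos'⟩ := hpos.exists_of_compl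
    (SimpleGraph.chromaticNumber_le_iff_colorable.1 (by exact_mod_cast hbip))
  exact isCircleGraph_iff_exists_isChordDiagram.2 ⟨_, hpos'.comp_strictMono Int.cast_strictMono⟩
end

section
/- Let n ≥ 1 and let G be a simple graph on vertex set V with |V| = n that is bipartite. Suppose there is a chord diagram on 2n points, i.e., a partition of Fin (2n) into n two-element blocks, together with a bijection between V and the blocks, such that two distinct vertices of V are adjacent in the complement of G if and only if their blocks interleave. Then there is a chord diagram on 2n points together with a bijection between V and its blocks such that two distinct vertices of V are adjacent in G if and only if their blocks interleave. -/
/-!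
Each colour class of `G` is a clique of `Gᶜ`, i.e. a family of pairwise interleaving chords.
Rotate the circle so that the half `[0, n)` contains exactly half of the endpoints of the
chords of one colour class; by a discrete intermediate value argument such a rotation exists,
and since `[0, n)` holds `n` points, it then also contains half of the endpoints of the other
class. In a pairwise interleaving family no chord lies in `[0, n)` while another lies in
`[n, 2n)`, so by counting every chord has exactly one endpoint in each half. For chords of this
kind, reversing the order of `[n, 2n)` exchanges interleaving and non-interleaving, which turns
the diagram of `Gᶜ` into a diagram of `G`.
-/

/-- Two blocks (chords) of a chord diagram, given as unordered pairs of positions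
`p = {p.1, p.2}` and `q = {q.1, q.2}` in `Fin N`, *interleave* if exactly one of the two
endpoints of `q` lies strictly between the two endpoints of `p` in the natural linear
order on `Fin N`. -/
def Interleave {N : ℕ} (p q : Fin N × Fin N) : Prop :=
  Xor' (min p.1 p.2 < q.1 ∧ q.1 < max p.1 p.2) (min p.1 p.2 < q.2 ∧ q.2 < max p.1 p.2)

open Finset Function

section Chord

variable {N : ℕ}

theorem interleave_iff_val (p q : Fin N × Fin N) :
    Interleave p q ↔
      Xor (min p.1.val p.2.val < q.1 ∧ q.1.val < max p.1.val p.2.val)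
        (min p.1.val p.2.val < q.2 ∧ q.2.val < max p.1.val p.2.val) :=
  Iff.rfl

theorem interleave_iff_xor_val_sub_lt {a b c d : Fin N} (hca : c ≠ a) (hcb : c ≠ b)
    (hda : d ≠ a) (hdb : d ≠ b) :
    Interleave (a, b) (c, d) ↔ Xor ((c - a).val < (b - a).val) ((d - a).val < (b - a).val) := by
  rw [interleave_iff_val, xor_iff_iff_not, xor_iff_iff_not]
  simp only [← Fin.val_ne_iff] at *
  have hc := Fin.coe_int_sub_eq_ite c a
  have hd := Fin.coe_int_sub_eq_ite d a
  have hb := Fin.coe_int_sub_eq_ite b a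
  simp only [Fin.le_iff_val_le_val] at hb hc hd
  split_ifs at hb hc hd <;> omega

theorem interleave_add_right_iff [NeZero N] (r : Fin N) {a b c d : Fin N}
    (hca : c ≠ a) (hcb : c ≠ b) (hda : d ≠ a) (hdb : d ≠ b) :
    Interleave (a + r, b + r) (c + r, d + r) ↔ Interleave (a, b) (c, d) := by
  rw [interleave_iff_xor_val_sub_lt (by simpa) (by simpa) (by simpa) (by simpa),
    interleave_iff_xor_val_sub_lt hca hcb hda hdb]
  simp only [add_sub_add_right_eq_sub]

def lowEndpoints (m : ℕ) (p : Fin N × Fin N) : ℕ :=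
  (if p.1.val < m then 1 else 0) + (if p.2.val < m then 1 else 0)

theorem lowEndpoints_le_two (m : ℕ) (p : Fin N × Fin N) : lowEndpoints m p ≤ 2 := by
  unfold lowEndpoints; split_ifs <;> omega

theorem not_interleave_of_lowEndpoints_eq_two_of_eq_zero {m : ℕ} {p q : Fin N × Fin N}
    (hp : lowEndpoints m p = 2) (hq : lowEndpoints m q = 0) : ¬ Interleave p q := by
  rw [interleave_iff_val, Xor]
  unfold lowEndpoints at hp hq
  split_ifs at hp hq <;> omega

end Chord

section Reflect

variable {n : ℕ}

def reflectHigh (n : ℕ) (x : Fin (2 * n)) : Fin (2 * n) :=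
  if h : x.val < n then x else ⟨3 * n - 1 - x.val, by omega⟩

theorem val_reflectHigh (x : Fin (2 * n)) :
    (reflectHigh n x).val = if x.val < n then x.val else 3 * n - 1 - x.val := by
  unfold reflectHigh; split_ifs <;> rfl

theorem reflectHigh_involutive (n : ℕ) : Involutive (reflectHigh n) := by
  intro x
  ext
  have := x.isLt
  simp only [val_reflectHigh]
  split_ifs <;> omega

-- Two chords crossing the middle interleave iff their lower endpoints and their upper
-- endpoints appear in opposite orders, so reversing the upper half flips interleaving.
theorem interleave_map_reflectHigh_iff {p q : Fin (2 * n) × Fin (2 * n)}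
    (hp : lowEndpoints n p = 1) (hq : lowEndpoints n q = 1) (h11 : p.1 ≠ q.1) (h12 : p.1 ≠ q.2)
    (h21 : p.2 ≠ q.1) (h22 : p.2 ≠ q.2) :
    Interleave (p.map (reflectHigh n) (reflectHigh n)) (q.map (reflectHigh n) (reflectHigh n)) ↔
      ¬ Interleave p q := by
  rw [interleave_iff_val, interleave_iff_val, Xor, Xor]
  simp only [Prod.map_fst, Prod.map_snd, val_reflectHigh]
  simp only [← Fin.val_ne_iff] at h11 h12 h21 h22
  unfold lowEndpoints at hp hq
  have := p.1.isLt; have := p.2.isLt; have := q.1.isLt; have := q.2.isLt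
  split_ifs at * <;> omega

end Reflect

theorem Finset.forall_eq_one_of_sum_eq_card {ι : Type*} {s : Finset ι} {f : ι → ℕ}
    (hf : ∀ i ∈ s, f i ≤ 2) (hsum : ∑ i ∈ s, f i = #s)
    (h02 : ∀ i ∈ s, ∀ j ∈ s, f i = 0 → f j ≠ 2) : ∀ i ∈ s, f i = 1 := by
  rw [card_eq_sum_ones] at hsum
  by_cases h0 : ∃ i ∈ s, f i = 0
  · obtain ⟨i, hi, hi0⟩ := h0
    have hle : ∀ j ∈ s, f j ≤ 1 := fun j hj => by
      have := hf j hj; have := h02 i hi j hj hi0; omega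
    exact (sum_eq_sum_iff_of_le hle).mp hsum
  · have hge : ∀ j ∈ s, 1 ≤ f j := fun j hj => Nat.one_le_iff_ne_zero.mpr fun h => h0 ⟨j, hj, h⟩
    exact fun j hj => ((sum_eq_sum_iff_of_le hge).mp hsum.symm j hj).symm

theorem Nat.exists_eq_of_forall_le_add_one {g : ℕ → ℕ} (hstep : ∀ i, g (i + 1) ≤ g i + 1)
    {k m : ℕ} (h0 : g 0 ≤ k) (hm : k ≤ g m) : ∃ i, g i = k := by
  induction m with
  | zero => exact ⟨0, le_antisymm h0 hm⟩
  | succ m ih =>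
    by_cases h : k ≤ g m
    · exact ih h
    · exact ⟨m + 1, by have := hstep m; omega⟩

open Fin.NatCast in
theorem Fin.exists_eq_of_forall_le_add_one {N : ℕ} [NeZero N] {F : Fin N → ℕ}
    (hstep : ∀ c, F (c + 1) ≤ F c + 1) {k : ℕ} {c₀ c₁ : Fin N} (h₀ : F c₀ ≤ k) (h₁ : k ≤ F c₁) :
    ∃ c, F c = k := by
  obtain ⟨i, hi⟩ := Nat.exists_eq_of_forall_le_add_one (g := fun i => F (c₀ + (i : Fin N)))
    (fun i => by rw [Nat.cast_succ, ← add_assoc]; exact hstep _) (m := (c₁ - c₀).val)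
    (by simpa using h₀) (by simpa using h₁)
  exact ⟨_, hi⟩

-- Rotating by one moves at most one point into the window `[0, n)`, and the windows of the
-- rotations by `c` and `c + n` are complementary, so the count passes through `k`.
theorem exists_card_filter_val_add_lt_eq {n k : ℕ} [NeZero n] (S : Finset (Fin (2 * n)))
    (hS : #S = 2 * k) : ∃ c : Fin (2 * n), #{x ∈ S | (x + c).val < n} = k := by
  have hn := Nat.pos_of_neZero n
  set F : Fin (2 * n) → ℕ := fun c => #{x ∈ S | (x + c).val < n}
  have hstep (c : Fin (2 * n)) : F (c + 1) ≤ F c + 1 := by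
    refine (card_le_card fun x hx => ?_).trans (card_insert_le (-(c + 1)) _)
    simp only [mem_filter, mem_insert] at hx ⊢
    by_cases hlow : (x + c).val < n
    · exact Or.inr ⟨hx.1, hlow⟩
    · refine Or.inl (eq_neg_of_add_eq_zero_left (Fin.ext ?_))
      have hsucc := Fin.val_add_eq_ite (x + c) 1
      rw [Fin.val_one', Nat.mod_eq_of_lt (by omega)] at hsucc
      rw [← add_assoc] at hx ⊢
      have := (x + c).isLt
      rw [Fin.val_zero]
      split_ifs at hsucc <;> omega
  set half : Fin (2 * n) := ⟨n, by omega⟩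
  have hflip (y : Fin (2 * n)) : (y + half).val < n ↔ ¬ y.val < n := by
    have hval : half.val = n := rfl
    rw [Fin.val_add_eq_ite, hval]
    have := y.isLt
    split_ifs <;> omega
  have hhalf (c : Fin (2 * n)) : F c + F (c + half) = 2 * k := by
    simp only [F, ← add_assoc, hflip]
    rw [card_filter_add_card_filter_not, hS]
  have hhalf₀ := hhalf 0
  rw [zero_add] at hhalf₀
  rcases le_total (F 0) k with h | h
  · exact Fin.exists_eq_of_forall_le_add_one hstep h (c₁ := half) (by omega)
  · exact Fin.exists_eq_of_forall_le_add_one hstep (c₀ := half) (by omega) h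

section Diagram

variable {V : Type*} {N : ℕ} {a b : V → Fin N}

def SimpleGraph.IsChordRepresentation (H : SimpleGraph V) (a b : V → Fin N) : Prop :=
  ∀ u v, u ≠ v → (H.Adj u v ↔ Interleave (a u, b u) (a v, b v))

theorem endpoints_ne_of_injective (hinj : Injective (Sum.elim a b)) {u v : V} (huv : u ≠ v) :
    a u ≠ a v ∧ a u ≠ b v ∧ b u ≠ a v ∧ b u ≠ b v :=
  ⟨fun h => huv (Sum.inl_injective (hinj h)), fun h => Sum.inl_ne_inr (hinj h),
    fun h => Sum.inr_ne_inl (hinj h), fun h => huv (Sum.inr_injective (hinj h))⟩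

theorem SimpleGraph.IsChordRepresentation.comp_add_right [NeZero N] {H : SimpleGraph V}
    (h : H.IsChordRepresentation a b) (hinj : Injective (Sum.elim a b)) (r : Fin N) :
    H.IsChordRepresentation ((· + r) ∘ a) ((· + r) ∘ b) := by
  intro u v huv
  obtain ⟨h₁, h₂, h₃, h₄⟩ := endpoints_ne_of_injective hinj huv
  exact (h u v huv).trans (interleave_add_right_iff r h₁.symm h₃.symm h₂.symm h₄.symm).symm

theorem SimpleGraph.IsChordRepresentation.comp_reflectHigh {n : ℕ} {a b : V → Fin (2 * n)}
    {H : SimpleGraph V} (h : Hᶜ.IsChordRepresentation a b) (hinj : Injective (Sum.elim a b))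
    (hsplit : ∀ v, lowEndpoints n (a v, b v) = 1) :
    H.IsChordRepresentation (reflectHigh n ∘ a) (reflectHigh n ∘ b) := by
  intro u v huv
  obtain ⟨h₁, h₂, h₃, h₄⟩ := endpoints_ne_of_injective hinj huv
  refine Iff.trans ?_ (interleave_map_reflectHigh_iff (hsplit u) (hsplit v) h₁ h₂ h₃ h₄).symm
  rw [← h u v huv, SimpleGraph.compl_adj, not_and, not_not]
  exact (imp_iff_right huv).symm

theorem card_filter_map_sumElim (hinj : Injective (Sum.elim a b)) (D : Finset V)
    (p : Fin N → Prop) [DecidablePred p] :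
    #{x ∈ (D.disjSum D).map ⟨_, hinj⟩ | p x} =
      ∑ v ∈ D, ((if p (a v) then 1 else 0) + (if p (b v) then 1 else 0)) := by
  rw [filter_map, card_map, card_filter, sum_disjSum, ← sum_add_distrib]
  rfl

theorem sum_lowEndpoints_eq_half {n : ℕ} [Fintype V] {a b : V → Fin (2 * n)}
    (hbij : Bijective (Sum.elim a b)) : ∑ v, lowEndpoints n (a v, b v) = n := by
  have := card_filter_map_sumElim hbij.injective univ (·.val < n)
  rw [univ_disjSum_univ, map_univ_of_surjective hbij.surjective, Fin.card_filter_val_lt] at this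
  exact this.symm.trans (min_eq_right (by omega))

theorem lowEndpoints_eq_one_of_pairwise_interleave {m : ℕ} {D : Finset V}
    (hD : (D : Set V).Pairwise fun u v => Interleave (a u, b u) (a v, b v))
    (hsum : ∑ v ∈ D, lowEndpoints m (a v, b v) = #D) :
    ∀ v ∈ D, lowEndpoints m (a v, b v) = 1 :=
  forall_eq_one_of_sum_eq_card (fun _ _ => lowEndpoints_le_two _ _) hsum
    fun u hu v hv hu0 hv2 => not_interleave_of_lowEndpoints_eq_two_of_eq_zero hv2 hu0
      (hD hv hu fun h => by rw [h] at hv2; omega)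

theorem lowEndpoints_eq_one_of_pairwise_interleave_compl {n : ℕ} [Fintype V] [DecidableEq V]
    {a b : V → Fin (2 * n)} (hbij : Bijective (Sum.elim a b)) (hcard : Fintype.card V = n)
    {A : Finset V} (hA : (A : Set V).Pairwise fun u v => Interleave (a u, b u) (a v, b v))
    (hAc : ((Aᶜ : Finset V) : Set V).Pairwise fun u v => Interleave (a u, b u) (a v, b v))
    (hsum : ∑ v ∈ A, lowEndpoints n (a v, b v) = #A) (v : V) :
    lowEndpoints n (a v, b v) = 1 := by
  have hsumc : ∑ v ∈ Aᶜ, lowEndpoints n (a v, b v) = #Aᶜ := by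
    have := sum_add_sum_compl A fun v => lowEndpoints n (a v, b v)
    have := card_add_card_compl A
    rw [sum_lowEndpoints_eq_half hbij] at *
    omega
  by_cases hv : v ∈ A
  · exact lowEndpoints_eq_one_of_pairwise_interleave hA hsum v hv
  · exact lowEndpoints_eq_one_of_pairwise_interleave hAc hsumc v (mem_compl.mpr hv)

end Diagram

/-- Let `G` be a bipartite graph on `n ≥ 1` vertices. If there is a chord diagram on `2n`
points (a partition of `Fin (2n)` into `n` two-element blocks, encoded by the endpoint maps
`a b : V → Fin (2n)` with `Sum.elim a b` bijective, the block of `v` being `{a v, b v}`)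
representing the complement of `G` (two distinct vertices are adjacent in `Gᶜ` iff their
blocks interleave), then there is a chord diagram on `2n` points representing `G`. -/
theorem bipartite_complement_of_chord_diagram {V : Type*} [Fintype V] (n : ℕ) (hn : 1 ≤ n)
    (hcard : Fintype.card V = n) (G : SimpleGraph V) (hbip : G.chromaticNumber ≤ 2)
    (a b : V → Fin (2 * n)) (hbij : Function.Bijective (Sum.elim a b))
    (hrep : ∀ u v : V, u ≠ v → (Gᶜ.Adj u v ↔ Interleave (a u, b u) (a v, b v))) :
    ∃ a' b' : V → Fin (2 * n), Function.Bijective (Sum.elim a' b') ∧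
      ∀ u v : V, u ≠ v → (G.Adj u v ↔ Interleave (a' u, b' u) (a' v, b' v)) := by
  classical
  have : NeZero n := ⟨by omega⟩
  obtain ⟨C⟩ : G.Colorable 2 := SimpleGraph.chromaticNumber_le_iff_colorable.mp hbip
  set A : Finset V := {v | C v = 0}
  obtain ⟨r, hr⟩ := exists_card_filter_val_add_lt_eq ((A.disjSum A).map ⟨_, hbij.injective⟩)
    (by rw [card_map, card_disjSum, two_mul])
  have hbij' : Bijective (Sum.elim ((· + r) ∘ a) ((· + r) ∘ b)) := by
    rw [← Sum.comp_elim]; exact (Equiv.addRight r).bijective.comp hbij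
  have hrep' := SimpleGraph.IsChordRepresentation.comp_add_right (H := Gᶜ) hrep hbij.injective r
  have hsame {u v : V} (huv : u ≠ v) (hC : C u = C v) :
      Interleave (a u + r, b u + r) (a v + r, b v + r) :=
    (hrep' u v huv).mp ((SimpleGraph.compl_adj _ _ _).mpr ⟨huv, fun h => C.valid h hC⟩)
  have hsplit := lowEndpoints_eq_one_of_pairwise_interleave_compl hbij' hcard
    (A := A) (fun u hu v hv huv => hsame huv (by simp_all [A]))
    (fun u hu v hv huv => hsame huv (by
      simp only [A, compl_filter, coe_filter, mem_univ, true_and] at hu hv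
      exact (Fin.eq_one_of_ne_zero _ hu).trans (Fin.eq_one_of_ne_zero _ hv).symm))
    (by rwa [card_filter_map_sumElim] at hr)
  refine ⟨reflectHigh n ∘ (· + r) ∘ a, reflectHigh n ∘ (· + r) ∘ b, ?_,
    hrep'.comp_reflectHigh hbij'.injective hsplit⟩
  rw [← Sum.comp_elim]
  exact (reflectHigh_involutive n).bijective.comp hbij'
end

section
/- Let n ≥ 1 and let s : ZMod (2n) → Bool be a function such that the number of indices i with s(i) = true is even, say equal to 2k. Then there exists an index i such that among the n consecutive positions i, i+1, …, i+n−1 (indices taken modulo 2n), exactly k of them satisfy s = true (and consequently exactly n − k of them satisfy s = false). -/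
open Finset

private lemma ivt_up (g : ℕ → ℕ) (h : ∀ m, g (m + 1) ≤ g m + 1) (k : ℕ) :
    ∀ b, g 0 ≤ k → k ≤ g b → ∃ m, m ≤ b ∧ g m = k := by
  intro b
  induction b with
  | zero => intro h0 hb; exact ⟨0, le_refl 0, le_antisymm h0 hb⟩
  | succ b ih =>
    intro h0 hb
    by_cases hc : k ≤ g b
    · obtain ⟨m, hm, hgm⟩ := ih h0 hc
      exact ⟨m, hm.trans (Nat.le_succ b), hgm⟩
    · push_neg at hc
      refine ⟨b + 1, le_refl _, le_antisymm ?_ hb⟩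
      exact (h b).trans hc
  
private lemma ivt_down (g : ℕ → ℕ) (h : ∀ m, g m ≤ g (m + 1) + 1) (k : ℕ) :
    ∀ b, k ≤ g 0 → g b ≤ k → ∃ m, m ≤ b ∧ g m = k := by
  intro b
  induction b with
  | zero => intro h0 hb; exact ⟨0, le_refl 0, le_antisymm hb h0⟩
  | succ b ih =>
    intro h0 hb
    by_cases hc : g b ≤ k
    · obtain ⟨m, hm, hgm⟩ := ih h0 hc
      exact ⟨m, hm.trans (Nat.le_succ b), hgm⟩
    · push_neg at hc
      refine ⟨b + 1, le_refl _, le_antisymm hb ?_⟩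
      have h1 := h b
      omega

/-- **Discrete intermediate value step for simultaneous bisection.**
Let `n ≥ 1` and let `s : ZMod (2n) → Bool` mark `2k` of the `2n` cyclically ordered points.
Then there is an index `i` such that among the `n` consecutive positions
`i, i+1, …, i+n−1` (modulo `2n`) exactly `k` are marked `true` (and consequently exactly
`n − k` are marked `false`). -/
theorem exists_window_with_half_of_marked {n k : ℕ} (hn : 1 ≤ n) (s : ZMod (2 * n) → Bool)
    (hcard : ((range (2 * n)).filter fun i : ℕ => s (i : ZMod (2 * n)) = true).card = 2 * k) :
    ∃ i : ZMod (2 * n),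
      ((range n).filter fun j : ℕ => s (i + (j : ZMod (2 * n))) = true).card = k ∧
      ((range n).filter fun j : ℕ => s (i + (j : ZMod (2 * n))) = false).card = n - k := by
  set b : ℕ → ℕ := fun t => if s ((t : ℕ) : ZMod (2 * n)) = true then 1 else 0 with hb
  set g : ℕ → ℕ := fun m => ∑ j ∈ range n, b (m + j) with hg
  -- step relation: g (m+1) + b m = g m + b (m + n)
  have hstep : ∀ m, g (m + 1) + b m = g m + b (m + n) := by
    intro m
    have h1 : g m + b (m + n) = ∑ j ∈ range (n + 1), b (m + j) := by
      rw [Finset.sum_range_succ]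
    have h2 : g (m + 1) + b m = ∑ j ∈ range (n + 1), b (m + j) := by
      rw [Finset.sum_range_succ' (fun j => b (m + j)) n]
      simp only [hg, Nat.add_zero]
      congr 1
      apply Finset.sum_congr rfl
      intro j _
      congr 1
      omega
    rw [h2, h1]
  have hb01 : ∀ t, b t ≤ 1 := by
    intro t; simp only [hb]; split <;> omega
  have hup : ∀ m, g (m + 1) ≤ g m + 1 := by
    intro m
    have := hstep m
    have := hb01 m
    have := hb01 (m + n)
    omega
  have hdown : ∀ m, g m ≤ g (m + 1) + 1 := by
    intro m
    have := hstep m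
    have := hb01 m
    have := hb01 (m + n)
    omega
  -- g 0 + g n = 2 * k
  have hsum : g 0 + g n = 2 * k := by
    have e1 : ((range (2 * n)).filter fun i : ℕ => s (i : ZMod (2 * n)) = true).card
        = ∑ i ∈ range (2 * n), b i := Finset.card_filter _ _
    have e2 : g 0 + g n = ∑ i ∈ range (2 * n), b i := by
      rw [show 2 * n = n + n by ring, Finset.sum_range_add]
      congr 1
      · simp only [hg, Nat.zero_add]
    omega
  -- find m ≤ n with g m = k
  have hmain : ∃ m, m ≤ n ∧ g m = k := by
    by_cases hc : g 0 ≤ k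
    · exact ivt_up g hup k n hc (by omega)
    · exact ivt_down g hdown k n (by omega) (by omega)
  obtain ⟨m, _, hgm⟩ := hmain
  refine ⟨(m : ZMod (2 * n)), ?_, ?_⟩
  · have : ((range n).filter fun j : ℕ =>
        s ((m : ZMod (2 * n)) + (j : ZMod (2 * n))) = true).card = g m := by
      rw [hg, Finset.card_filter]
      apply Finset.sum_congr rfl
      intro j _
      simp only [hb]
      push_cast
      rfl
    rw [this, hgm]
  · have hpart : ((range n).filter fun j : ℕ =>
        s ((m : ZMod (2 * n)) + (j : ZMod (2 * n))) = true).card +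
        ((range n).filter fun j : ℕ =>
        s ((m : ZMod (2 * n)) + (j : ZMod (2 * n))) = false).card = n := by
      simp only [Finset.card_filter]
      rw [← Finset.sum_add_distrib]
      have hone : ∀ x ∈ range n,
          ((if s ((m : ZMod (2 * n)) + (x : ZMod (2 * n))) = true then 1 else 0) +
           (if s ((m : ZMod (2 * n)) + (x : ZMod (2 * n))) = false then 1 else 0)) = 1 := by
        intro x _
        cases h : s ((m : ZMod (2 * n)) + (x : ZMod (2 * n))) <;> simp
      rw [Finset.sum_congr rfl hone, Finset.sum_const, smul_eq_mul, mul_one,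
        Finset.card_range]
    have htrue : ((range n).filter fun j : ℕ =>
        s ((m : ZMod (2 * n)) + (j : ZMod (2 * n))) = true).card = k := by
      rw [← hgm, hg, Finset.card_filter]
      apply Finset.sum_congr rfl
      intro j _
      simp only [hb]
      push_cast
      rfl
    omega
end

section
/- Let c_1, …, c_n be chords of the unit circle in ℝ² whose 2n endpoints are pairwise distinct, and suppose the chords pairwise intersect (every two of the closed segments have a common point). Let f : ℝ² → ℝ be a nonzero linear functional and t a real number such that exactly n of the 2n endpoints satisfy f(x) < t and exactly n of them satisfy f(x) > t. Then for every i, the closed segment c_i contains a point x with f(x) = t; that is, the line {x : f(x) = t} intersects every chord c_1, …, c_n. -/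
open Finset

private lemma card_filter_sum' {α β} [Fintype α] [Fintype β] (p : α ⊕ β → Prop) [DecidablePred p] :
    (univ.filter p).card =
      (univ.filter (fun x => p (Sum.inl x))).card + (univ.filter (fun y => p (Sum.inr y))).card := by
  simp only [Finset.card_filter]
  rw [Fintype.sum_sum_type]

private lemma cross_segment {E : Type*} [AddCommGroup E] [Module ℝ E]
    (f : E →ₗ[ℝ] ℝ) {u v : E} {t : ℝ} (h1 : f u ≤ t) (h2 : t ≤ f v) :
    ∃ x ∈ segment ℝ u v, f x = t := by
  rcases eq_or_lt_of_le (h1.trans h2) with h | h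
  · exact ⟨u, left_mem_segment ℝ u v, by linarith⟩
  · set s : ℝ := (t - f u) / (f v - f u) with hs
    have hvu : 0 < f v - f u := by linarith
    have hs0 : 0 ≤ s := div_nonneg (by linarith) hvu.le
    have hs1 : s ≤ 1 := by rw [hs, div_le_one hvu]; linarith
    refine ⟨(1 - s) • u + s • v, ⟨1 - s, s, by linarith, hs0, by ring, rfl⟩, ?_⟩
    rw [map_add, map_smul, map_smul, smul_eq_mul, smul_eq_mul, hs]
    field_simp
    ring

private lemma seg_lt' {E : Type*} [AddCommGroup E] [Module ℝ E]
    (f : E →ₗ[ℝ] ℝ) {u v x : E} {t : ℝ} (h1 : f u < t) (h2 : f v < t)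
    (hx : x ∈ segment ℝ u v) : f x < t := by
  obtain ⟨p, q, hp, hq, hpq, rfl⟩ := hx
  rw [map_add, map_smul, map_smul, smul_eq_mul, smul_eq_mul]
  rcases eq_or_lt_of_le hp with h | h
  · have hq1 : q = 1 := by linarith
    rw [← h, hq1]; nlinarith
  · have e : p * t + q * t = t := by rw [← add_mul, hpq, one_mul]
    linarith [mul_lt_mul_of_pos_left h1 h, mul_le_mul_of_nonneg_left h2.le hq]

private lemma seg_gt' {E : Type*} [AddCommGroup E] [Module ℝ E]
    (f : E →ₗ[ℝ] ℝ) {u v x : E} {t : ℝ} (h1 : t < f u) (h2 : t < f v)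
    (hx : x ∈ segment ℝ u v) : t < f x := by
  have := seg_lt' (-f) (t := -t) (by simpa using h1) (by simpa using h2) hx
  simpa using this

/-- **A bisecting line meets every chord of a family of pairwise intersecting chords.**
Let `c i = [a i, b i]` (`i = 1, …, n`) be chords of the unit circle in `ℝ²` with pairwise
distinct endpoints, pairwise intersecting. If a line `{x : f x = t}` (with `f` a nonzero
linear functional) is such that exactly `n` of the `2n` endpoints lie in each open
half-plane, then the line intersects every chord: each closed segment `c i` contains a
point `x` with `f x = t`. -/
theorem bisecting_line_meets_all_chords {n : ℕ} (a b : Fin n → EuclideanSpace ℝ (Fin 2))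
    (ha : ∀ i, ‖a i‖ = 1) (hb : ∀ i, ‖b i‖ = 1)
    (hdist : Function.Injective (Sum.elim a b))
    (hint : ∀ i j, i ≠ j →
      (segment ℝ (a i) (b i) ∩ segment ℝ (a j) (b j)).Nonempty)
    (f : EuclideanSpace ℝ (Fin 2) →ₗ[ℝ] ℝ) (t : ℝ) (hf : f ≠ 0)
    (hlt : (univ.filter fun p : Fin n ⊕ Fin n => f (Sum.elim a b p) < t).card = n)
    (hgt : (univ.filter fun p : Fin n ⊕ Fin n => t < f (Sum.elim a b p)).card = n) :
    ∀ i, ∃ x ∈ segment ℝ (a i) (b i), f x = t := by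
  classical
  -- Every endpoint is strictly on one side
  have hd : ∀ p : Fin n ⊕ Fin n, f (Sum.elim a b p) < t ∨ t < f (Sum.elim a b p) := by
    set L := univ.filter fun p : Fin n ⊕ Fin n => f (Sum.elim a b p) < t with hL
    set G := univ.filter fun p : Fin n ⊕ Fin n => t < f (Sum.elim a b p) with hG
    have hdisj : Disjoint L G := by
      rw [Finset.disjoint_left]
      intro p hp hq
      rw [hL, Finset.mem_filter] at hp
      rw [hG, Finset.mem_filter] at hq
      linarith [hp.2, hq.2]
    have hcard : (L ∪ G).card = Fintype.card (Fin n ⊕ Fin n) := by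
      rw [Finset.card_union_of_disjoint hdisj, hlt, hgt]; simp
    have huniv := Finset.eq_univ_of_card _ hcard
    intro p
    have : p ∈ L ∪ G := huniv ▸ Finset.mem_univ p
    rcases Finset.mem_union.mp this with h | h
    · exact Or.inl (Finset.mem_filter.mp h).2
    · exact Or.inr (Finset.mem_filter.mp h).2
  have hda : ∀ i, f (a i) < t ∨ t < f (a i) := fun i => hd (Sum.inl i)
  have hdb : ∀ i, f (b i) < t ∨ t < f (b i) := fun i => hd (Sum.inr i)
  -- four classes of chords
  set A1 := univ.filter (fun i : Fin n => f (a i) < t ∧ f (b i) < t) with hA1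
  set A2 := univ.filter (fun i : Fin n => f (a i) < t ∧ t < f (b i)) with hA2
  set A3 := univ.filter (fun i : Fin n => t < f (a i) ∧ f (b i) < t) with hA3
  set A4 := univ.filter (fun i : Fin n => t < f (a i) ∧ t < f (b i)) with hA4
  have hLsplit : (univ.filter fun p : Fin n ⊕ Fin n => f (Sum.elim a b p) < t).card
      = (univ.filter (fun i : Fin n => f (a i) < t)).card
        + (univ.filter (fun i : Fin n => f (b i) < t)).card := card_filter_sum' _
  have hGsplit : (univ.filter fun p : Fin n ⊕ Fin n => t < f (Sum.elim a b p)).card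
      = (univ.filter (fun i : Fin n => t < f (a i))).card
        + (univ.filter (fun i : Fin n => t < f (b i))).card := card_filter_sum' _
  have e1 : univ.filter (fun i : Fin n => f (a i) < t) = A1 ∪ A2 := by
    rw [hA1, hA2]; ext i
    simp only [Finset.mem_union, Finset.mem_filter, Finset.mem_univ, true_and]
    rcases hdb i with h | h <;> constructor <;> intro hh <;> first | tauto | (exfalso; rcases hh with hh|hh <;> linarith [hh.2])
  have e2 : univ.filter (fun i : Fin n => f (b i) < t) = A1 ∪ A3 := by
    rw [hA1, hA3]; ext i
    simp only [Finset.mem_union, Finset.mem_filter, Finset.mem_univ, true_and]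
    rcases hda i with h | h <;> constructor <;> intro hh <;> first | tauto | (exfalso; rcases hh with hh|hh <;> linarith [hh.1])
  have e3 : univ.filter (fun i : Fin n => t < f (a i)) = A3 ∪ A4 := by
    rw [hA3, hA4]; ext i
    simp only [Finset.mem_union, Finset.mem_filter, Finset.mem_univ, true_and]
    rcases hdb i with h | h <;> constructor <;> intro hh <;> first | tauto | (exfalso; rcases hh with hh|hh <;> linarith [hh.2])
  have e4 : univ.filter (fun i : Fin n => t < f (b i)) = A2 ∪ A4 := by
    rw [hA2, hA4]; ext i
    simp only [Finset.mem_union, Finset.mem_filter, Finset.mem_univ, true_and]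
    rcases hda i with h | h <;> constructor <;> intro hh <;> first | tauto | (exfalso; rcases hh with hh|hh <;> linarith [hh.1])
  have d12 : Disjoint A1 A2 := by
    rw [Finset.disjoint_left]; intro i h1 h2
    rw [hA1, Finset.mem_filter] at h1; rw [hA2, Finset.mem_filter] at h2
    linarith [h1.2.2, h2.2.2]
  have d13 : Disjoint A1 A3 := by
    rw [Finset.disjoint_left]; intro i h1 h2
    rw [hA1, Finset.mem_filter] at h1; rw [hA3, Finset.mem_filter] at h2
    linarith [h1.2.1, h2.2.1]
  have d34 : Disjoint A3 A4 := by
    rw [Finset.disjoint_left]; intro i h1 h2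
    rw [hA3, Finset.mem_filter] at h1; rw [hA4, Finset.mem_filter] at h2
    linarith [h1.2.2, h2.2.2]
  have d24 : Disjoint A2 A4 := by
    rw [Finset.disjoint_left]; intro i h1 h2
    rw [hA2, Finset.mem_filter] at h1; rw [hA4, Finset.mem_filter] at h2
    linarith [h1.2.1, h2.2.1]
  have hsum1 : A1.card + A2.card + (A1.card + A3.card) = n := by
    rw [← Finset.card_union_of_disjoint d12, ← Finset.card_union_of_disjoint d13,
      ← e1, ← e2, ← hLsplit, hlt]
  have hsum2 : A3.card + A4.card + (A2.card + A4.card) = n := by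
    rw [← Finset.card_union_of_disjoint d34, ← Finset.card_union_of_disjoint d24,
      ← e3, ← e4, ← hGsplit, hgt]
  have hcard14 : A1.card = A4.card := by omega
  -- no chord lies entirely on one side
  have hkey : ∀ i j : Fin n, f (a i) < t → f (b i) < t → t < f (a j) → t < f (b j) → False := by
    intro i j hai hbi haj hbj
    have hij : i ≠ j := fun h => by subst h; linarith
    obtain ⟨x, hxi, hxj⟩ := hint i j hij
    have h1 := seg_lt' f hai hbi hxi
    have h2 := seg_gt' f haj hbj hxj
    linarith
  have hA1empty : A1 = ∅ := by
    by_contra h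
    obtain ⟨i, hi⟩ := Finset.nonempty_of_ne_empty h
    have h4 : A4.Nonempty := Finset.card_pos.mp (by rw [← hcard14]; exact Finset.card_pos.mpr ⟨i, hi⟩)
    obtain ⟨j, hj⟩ := h4
    rw [hA1, Finset.mem_filter] at hi
    rw [hA4, Finset.mem_filter] at hj
    exact hkey i j hi.2.1 hi.2.2 hj.2.1 hj.2.2
  have hA4empty : A4 = ∅ := Finset.card_eq_zero.mp (by rw [← hcard14, hA1empty]; simp)
  -- conclude
  intro i
  rcases hda i with h1 | h1 <;> rcases hdb i with h2 | h2
  · exfalso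
    have : i ∈ A1 := by rw [hA1, Finset.mem_filter]; exact ⟨Finset.mem_univ i, h1, h2⟩
    rw [hA1empty] at this; exact absurd this (Finset.notMem_empty i)
  · exact cross_segment f h1.le h2.le
  · obtain ⟨x, hx, hfx⟩ := cross_segment f h2.le h1.le
    exact ⟨x, segment_symm ℝ (b i) (a i) ▸ hx, hfx⟩
  · exfalso
    have : i ∈ A4 := by rw [hA4, Finset.mem_filter]; exact ⟨Finset.mem_univ i, h1, h2⟩
    rw [hA4empty] at this; exact absurd this (Finset.notMem_empty i)
end

section
/- Let c_1, …, c_n be chords of the unit circle in ℝ² whose 2n endpoints are pairwise distinct, and suppose the chords pairwise intersect (every two of the closed segments have a common point). Let f : ℝ² → ℝ be a nonzero linear functional and t a real number such that exactly n of the 2n endpoints satisfy f(x) < t and exactly n of them satisfy f(x) > t. Then every chord c_i has exactly one endpoint in each open half-plane: if a_i and b_i are the two endpoints of c_i, then f(a_i) < t if and only if f(b_i) > t. -/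
/-!
If some chord had both endpoints in one open half-plane, then, since each half-plane holds
exactly `n` of the `2n` endpoints, no endpoint lies on the line and some other chord must have
both endpoints in the opposite half-plane. The two chords would then lie in disjoint convex
half-planes, contradicting that they intersect.
-/

open Finset

theorem card_filter_sumElim {ι κ α : Type*} [Fintype ι] [Fintype κ] (x : ι → α) (y : κ → α)
    (P : α → Prop) [DecidablePred P] :
    #{p : ι ⊕ κ | P (Sum.elim x y p)} = #{i | P (x i)} + #{j | P (y j)} := by
  simp only [card_filter, Fintype.sum_sum_type, Sum.elim_inl, Sum.elim_inr]
  rfl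

theorem Finset.eq_of_sum_eq_of_not_lt_of_lt {ι M : Type*} [AddCommMonoid M] [LinearOrder M]
    [IsOrderedCancelAddMonoid M] {s : Finset ι} {u v : ι → M}
    (hsum : ∑ i ∈ s, u i = ∑ i ∈ s, v i) (h : ∀ i ∈ s, ∀ j ∈ s, u i < v i → ¬ v j < u j) :
    ∀ i ∈ s, u i = v i := by
  by_cases hle : ∀ i ∈ s, u i ≤ v i
  · exact (sum_eq_sum_iff_of_le hle).1 hsum
  · push Not at hle
    obtain ⟨j, hj, hvu⟩ := hle
    have hge : ∀ i ∈ s, v i ≤ u i := fun i hi => not_lt.1 fun huv => h i hi j hj huv hvu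
    exact fun i hi => ((sum_eq_sum_iff_of_le hge).1 hsum.symm i hi).symm

theorem Finset.forall_eq_one_of_sum_eq_card_s5 {ι : Type*} {s : Finset ι} {u v : ι → ℕ}
    (hu : ∑ i ∈ s, u i = #s) (hv : ∑ i ∈ s, v i = #s) (hle : ∀ i ∈ s, u i + v i ≤ 2)
    (h : ∀ i ∈ s, ∀ j ∈ s, i ≠ j → v i = 2 → u j ≠ 2) :
    ∀ i ∈ s, u i = 1 ∧ v i = 1 := by
  have htwo : ∀ i ∈ s, u i + v i = 2 := by
    refine (sum_eq_sum_iff_of_le hle).1 ?_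
    rw [sum_add_distrib, hu, hv, sum_const, smul_eq_mul]
    omega
  have heq : ∀ i ∈ s, u i = v i := by
    refine eq_of_sum_eq_of_not_lt_of_lt (hu.trans hv.symm) fun i hi j hj hij hji => ?_
    obtain rfl | hne := eq_or_ne i j
    · exact lt_asymm hij hji
    · exact h i hi j hj hne (by have := htwo i hi; omega) (by have := htwo j hj; omega)
  intro i hi
  have := htwo i hi
  have := heq i hi
  omega

theorem lt_iff_lt_of_card_filter_eq {ι : Type*} [Fintype ι] {x y : ι → ℝ} {t : ℝ}
    (hlt : #{i | x i < t} + #{i | y i < t} = Fintype.card ι)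
    (hgt : #{i | t < x i} + #{i | t < y i} = Fintype.card ι)
    (hsep : ∀ i j, i ≠ j → t < x i → t < y i → x j < t → y j < t → False) (i : ι) :
    x i < t ↔ t < y i := by
  set below : ι → ℕ := fun i => (if x i < t then 1 else 0) + if y i < t then 1 else 0
  set above : ι → ℕ := fun i => (if t < x i then 1 else 0) + if t < y i then 1 else 0
  have hone := forall_eq_one_of_sum_eq_card_s5 (s := univ) (u := below) (v := above)
    (by simp only [below, sum_add_distrib, ← card_filter, hlt, card_univ])
    (by simp only [above, sum_add_distrib, ← card_filter, hgt, card_univ])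
    (fun i _ => by dsimp only [below, above]; split_ifs <;> first | omega | linarith)
    (fun i _ j _ hij hi hj => by
      dsimp only [below, above] at hi hj
      split_ifs at hi hj <;> first | omega | exact hsep i j hij ‹_› ‹_› ‹_› ‹_›)
  obtain ⟨hb, ha⟩ := hone i (mem_univ i)
  dsimp only [below, above] at hb ha
  split_ifs at hb ha <;> first | omega | grind

theorem disjoint_segment_of_map_lt_of_lt_map {𝕜 E : Type*} [Field 𝕜] [LinearOrder 𝕜]
    [IsStrictOrderedRing 𝕜] [AddCommGroup E] [Module 𝕜 E] (f : E →ₗ[𝕜] 𝕜) {t : 𝕜}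
    {a b c d : E} (ha : f a < t) (hb : f b < t) (hc : t < f c) (hd : t < f d) :
    Disjoint (segment 𝕜 a b) (segment 𝕜 c d) :=
  Set.disjoint_left.2 fun _ hab hcd =>
    ((convex_halfSpace_lt f.isLinear t).segment_subset ha hb hab).not_gt
      ((convex_halfSpace_gt f.isLinear t).segment_subset hc hd hcd)

theorem bisecting_line_separates_endpoints_of_each_chord_general {n : ℕ}
    (a b : Fin n → EuclideanSpace ℝ (Fin 2))
    (hint : ∀ i j, i ≠ j →
      (segment ℝ (a i) (b i) ∩ segment ℝ (a j) (b j)).Nonempty)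
    (f : EuclideanSpace ℝ (Fin 2) →ₗ[ℝ] ℝ) (t : ℝ)
    (hlt : (univ.filter fun p : Fin n ⊕ Fin n => f (Sum.elim a b p) < t).card = n)
    (hgt : (univ.filter fun p : Fin n ⊕ Fin n => t < f (Sum.elim a b p)).card = n) :
    ∀ i, (f (a i) < t ↔ t < f (b i)) := by
  have hsep : ∀ i j, i ≠ j → t < f (a i) → t < f (b i) → f (a j) < t → f (b j) < t → False :=
    fun i j hij hai hbi haj hbj => (hint j i hij.symm).ne_empty
      (Set.disjoint_iff_inter_eq_empty.1 (disjoint_segment_of_map_lt_of_lt_map f haj hbj hai hbi))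
  rw [card_filter_sumElim a b (fun z => f z < t)] at hlt
  rw [card_filter_sumElim a b (fun z => t < f z)] at hgt
  exact lt_iff_lt_of_card_filter_eq (by simpa using hlt) (by simpa using hgt) hsep

/-- **Every chord of a pairwise intersecting family has one endpoint on each side of a
bisecting line.** Let `c i = [a i, b i]` (`i = 1, …, n`) be chords of the unit circle in
`ℝ²` with pairwise distinct endpoints, pairwise intersecting. If a line `{x : f x = t}`
(with `f` a nonzero linear functional) is such that exactly `n` of the `2n` endpoints lie
in each open half-plane, then each chord has exactly one endpoint in each open half-plane:
`f (a i) < t ↔ t < f (b i)`. -/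
theorem bisecting_line_separates_endpoints_of_each_chord {n : ℕ}
    (a b : Fin n → EuclideanSpace ℝ (Fin 2))
    (ha : ∀ i, ‖a i‖ = 1) (hb : ∀ i, ‖b i‖ = 1)
    (hdist : Function.Injective (Sum.elim a b))
    (hint : ∀ i j, i ≠ j →
      (segment ℝ (a i) (b i) ∩ segment ℝ (a j) (b j)).Nonempty)
    (f : EuclideanSpace ℝ (Fin 2) →ₗ[ℝ] ℝ) (t : ℝ) (hf : f ≠ 0)
    (hlt : (univ.filter fun p : Fin n ⊕ Fin n => f (Sum.elim a b p) < t).card = n)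
    (hgt : (univ.filter fun p : Fin n ⊕ Fin n => t < f (Sum.elim a b p)).card = n) :
    ∀ i, (f (a i) < t ↔ t < f (b i)) :=
  bisecting_line_separates_endpoints_of_each_chord_general a b hint f t hlt hgt
end

section
/- Let n ≥ 1. Consider two chords of a chord diagram on 2n points each having exactly one endpoint among the first n positions: say the chords are {a, b} and {c, d} with a, c ∈ {0, …, n−1}, b, d ∈ {n, …, 2n−1}, a ≠ c and b ≠ d. Let ρ be the map that reverses the first n positions and fixes the rest, i.e., ρ(x) = n − 1 − x for x < n and ρ(x) = x for x ≥ n. Then the chords {a, b} and {c, d} interleave if and only if the chords {ρ(a), b} and {ρ(c), d} do not interleave. -/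
/-- The map reversing the order of the first `n` positions of `Fin (2n)` and fixing the
remaining `n` positions: `ρ(x) = n − 1 − x` for `x < n` and `ρ(x) = x` for `x ≥ n`. -/
def reverseFirstHalf (n : ℕ) (x : Fin (2 * n)) : Fin (2 * n) :=
  if h : (x : ℕ) < n then ⟨n - 1 - (x : ℕ), by omega⟩ else x

/-! A chord `{a, b}` with `a < n ≤ b` contains, strictly inside, exactly the points `c < n` with
`a < c` and the points `d ≥ n` with `d < b`. So two such chords interleave iff exactly one of
`a < c` and `d < b` holds. Reversing the first half flips the first comparison and keeps the
second, which flips the exclusive or. -/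

theorem interleave_iff_xor {N : ℕ} {a b c d : Fin N} (hab : a ≤ b) (hcb : c < b) (had : a < d) :
    Interleave (a, b) (c, d) ↔ Xor (a < c) (d < b) := by
  simp only [Interleave, min_eq_left hab, max_eq_right hab, hcb, had, and_true, true_and]
  rfl

theorem val_reverseFirstHalf_of_lt {n : ℕ} {x : Fin (2 * n)} (hx : (x : ℕ) < n) :
    (reverseFirstHalf n x : ℕ) = n - 1 - x := by
  simp [reverseFirstHalf, hx]

theorem val_reverseFirstHalf_lt {n : ℕ} {x : Fin (2 * n)} (hx : (x : ℕ) < n) :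
    (reverseFirstHalf n x : ℕ) < n := by
  rw [val_reverseFirstHalf_of_lt hx]
  omega

theorem reverseFirstHalf_lt_reverseFirstHalf_iff {n : ℕ} {a c : Fin (2 * n)}
    (ha : (a : ℕ) < n) (hc : (c : ℕ) < n) :
    reverseFirstHalf n a < reverseFirstHalf n c ↔ c < a := by
  rw [Fin.lt_def, Fin.lt_def, val_reverseFirstHalf_of_lt ha, val_reverseFirstHalf_of_lt hc]
  omega

theorem interleave_iff_not_interleave_reverseFirstHalf_general {n : ℕ}
    (a b c d : Fin (2 * n)) (ha : (a : ℕ) < n) (hc : (c : ℕ) < n)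
    (hb : n ≤ (b : ℕ)) (hd : n ≤ (d : ℕ)) (hac : a ≠ c) :
    Interleave (a, b) (c, d) ↔
      ¬ Interleave (reverseFirstHalf n a, b) (reverseFirstHalf n c, d) := by
  have first_lt_second {x y : Fin (2 * n)} (hx : (x : ℕ) < n) (hy : n ≤ (y : ℕ)) : x < y :=
    Fin.lt_def.2 (by omega)
  have hρa := val_reverseFirstHalf_lt ha
  have hρc := val_reverseFirstHalf_lt hc
  rw [interleave_iff_xor (first_lt_second ha hb).le (first_lt_second hc hb)
      (first_lt_second ha hd),
    interleave_iff_xor (first_lt_second hρa hb).le (first_lt_second hρc hb)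
      (first_lt_second hρa hd),
    reverseFirstHalf_lt_reverseFirstHalf_iff ha hc, ← hac.le_iff_lt, ← not_lt,
    xor_not_left, not_xor]

/-- **Reversing one side of a bisecting line exchanges crossing and non-crossing chords.**
Let `n ≥ 1` and let `{a, b}` and `{c, d}` be two chords of a chord diagram on `2n` points,
each having exactly one endpoint among the first `n` positions: `a, c < n ≤ b, d`, with
`a ≠ c` and `b ≠ d`. Then `{a, b}` and `{c, d}` interleave if and only if
`{ρ a, b}` and `{ρ c, d}` do not, where `ρ` reverses the first `n` positions. -/
theorem interleave_iff_not_interleave_reverseFirstHalf {n : ℕ} (hn : 1 ≤ n)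
    (a b c d : Fin (2 * n)) (ha : (a : ℕ) < n) (hc : (c : ℕ) < n)
    (hb : n ≤ (b : ℕ)) (hd : n ≤ (d : ℕ)) (hac : a ≠ c) (hbd : b ≠ d) :
    Interleave (a, b) (c, d) ↔
      ¬ Interleave (reverseFirstHalf n a, b) (reverseFirstHalf n c, d) :=
  interleave_iff_not_interleave_reverseFirstHalf_general a b c d ha hc hb hd hac
end
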